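/- Let $\lambda_1, \ldots, \lambda_m \in \mathbb{C}^*$ be pairwise distinct and let $V(\eta,\epsilon,\theta)$ be an irreducible highest weight module over the affine-Virasoro algebra $\mathfrak{L}$ of type $A_1$. Then for any nonzero $v \in V(\eta,\epsilon,\theta)$, the element $1 \otimes \cdots \otimes 1 \otimes v$ generates the tensor product module $\mathbf{T}^M = (\otimes_{k=1}^m M(\lambda_k,\alpha_k,\beta_k,\gamma_k)) \otimes V(\eta,\epsilon,\theta)$ as an $\mathfrak{L}$-module. -/

import Mathlib

/-!
Every vector of `V(η,ε,θ)` is killed by `e_i, f_i, h_i, d_i` for all `i ≫ 0`: such vectors form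
a submodule, and it contains the highest weight vector. So for `i ≫ 0`, `h_i` and `d_i` act on
`g ⊗ v` through the polynomial factor alone, as `∑_k λ_k^i P_k(i)` where `P_k` is a polynomial in
`i` whose constant coefficient is `t_k g ⊗ v`, resp. `s_k g ⊗ v`. The sequences `n ↦ P(n) μⁿ` are
generalized eigenvectors of the shift operator with eigenvalue `μ`, so for distinct `λ_k` all
coefficients of all `P_k` lie in the submodule. Hence `ℂ[s,t] ⊗ v` lies in it, and then
`{w | ℂ[s,t] ⊗ w ⊆ W}` is a nonzero submodule of `V`, which is all of `V` by irreducibility.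
-/

open MvPolynomial TensorProduct

/-- `ℂ[s₁,…,s_m,t₁,…,t_m]`: the variable `(k,0)` is `s_k` and `(k,1)` is `t_k`. -/
noncomputable abbrev PP (m : ℕ) : Type := MvPolynomial (Fin m × Fin 2) ℂ

/-- Substitution `g ↦ g(…, s_k - i, t_k + a, …)` acting only on the `k`-th pair of
variables. -/
noncomputable def subm (m : ℕ) (k : Fin m) (i : ℤ) (a : ℂ) : PP m →ₐ[ℂ] PP m :=
  aeval fun w => if w = (k, 0) then X w - MvPolynomial.C (i : ℂ)
    else if w = (k, 1) then X w + MvPolynomial.C a else X w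

/-- The action of `e_i` on the `k`-th tensor factor `M(λ_k,α_k,β_k,γ_k)`, where
`Mt = 0, 1, 2` selects `M = Ω, Δ, Θ` respectively. -/
noncomputable def facE (m : ℕ) (Mt : Fin 3) (lam alp bet : Fin m → ℂ) (k : Fin m) (i : ℤ) :
    PP m →ₗ[ℂ] PP m :=
  if Mt = 0 then ((lam k) ^ i * alp k) • (subm m k i (-2)).toLinearMap
  else if Mt = 1 then (-((lam k) ^ i / alp k)) •
    (LinearMap.mulLeft ℂ ((MvPolynomial.C (1/2 : ℂ) * X (k, 1) + MvPolynomial.C (bet k)) *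
        (MvPolynomial.C (1/2 : ℂ) * X (k, 1) - MvPolynomial.C (bet k) - 1)) ∘ₗ
      (subm m k i (-2)).toLinearMap)
  else ((lam k) ^ i * alp k) •
    (LinearMap.mulLeft ℂ (MvPolynomial.C (1/2 : ℂ) * X (k, 1) + MvPolynomial.C (bet k)) ∘ₗ
      (subm m k i (-2)).toLinearMap)

/-- The action of `f_i` on the `k`-th tensor factor. -/
noncomputable def facF (m : ℕ) (Mt : Fin 3) (lam alp bet : Fin m → ℂ) (k : Fin m) (i : ℤ) :
    PP m →ₗ[ℂ] PP m :=
  if Mt = 0 then (-((lam k) ^ i / alp k)) •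
    (LinearMap.mulLeft ℂ ((MvPolynomial.C (1/2 : ℂ) * X (k, 1) - MvPolynomial.C (bet k)) *
        (MvPolynomial.C (1/2 : ℂ) * X (k, 1) + MvPolynomial.C (bet k) + 1)) ∘ₗ
      (subm m k i 2).toLinearMap)
  else if Mt = 1 then ((lam k) ^ i * alp k) • (subm m k i 2).toLinearMap
  else (-((lam k) ^ i / alp k)) •
    (LinearMap.mulLeft ℂ (MvPolynomial.C (1/2 : ℂ) * X (k, 1) - MvPolynomial.C (bet k)) ∘ₗ
      (subm m k i 2).toLinearMap)

/-- The action of `h_i` on the `k`-th tensor factor. -/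
noncomputable def facH (m : ℕ) (lam : Fin m → ℂ) (k : Fin m) (i : ℤ) : PP m →ₗ[ℂ] PP m :=
  (lam k) ^ i • (LinearMap.mulLeft ℂ (X (k, 1)) ∘ₗ (subm m k i 0).toLinearMap)

/-- The action of `d_i` on the `k`-th tensor factor. -/
noncomputable def facD (m : ℕ) (lam gam : Fin m → ℂ) (k : Fin m) (i : ℤ) :
    PP m →ₗ[ℂ] PP m :=
  (lam k) ^ i • (LinearMap.mulLeft ℂ (X (k, 0) + MvPolynomial.C ((i : ℂ) * gam k)) ∘ₗ
    (subm m k i 0).toLinearMap)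

/-- The diagonal action of `e_i` on `⊗_{k=1}^m M(λ_k,α_k,β_k,γ_k) ⊗ V`. -/
noncomputable def tenE (m : ℕ) (Mt : Fin 3) (lam alp bet : Fin m → ℂ)
    {V : Type*} [AddCommGroup V] [Module ℂ V] (Ev : ℤ → V →ₗ[ℂ] V) (i : ℤ) :
    PP m ⊗[ℂ] V →ₗ[ℂ] PP m ⊗[ℂ] V :=
  TensorProduct.map (∑ k : Fin m, facE m Mt lam alp bet k i) LinearMap.id +
    TensorProduct.map LinearMap.id (Ev i)

/-- The diagonal action of `f_i`. -/
noncomputable def tenF (m : ℕ) (Mt : Fin 3) (lam alp bet : Fin m → ℂ)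
    {V : Type*} [AddCommGroup V] [Module ℂ V] (Fv : ℤ → V →ₗ[ℂ] V) (i : ℤ) :
    PP m ⊗[ℂ] V →ₗ[ℂ] PP m ⊗[ℂ] V :=
  TensorProduct.map (∑ k : Fin m, facF m Mt lam alp bet k i) LinearMap.id +
    TensorProduct.map LinearMap.id (Fv i)

/-- The diagonal action of `h_i`. -/
noncomputable def tenH (m : ℕ) (lam : Fin m → ℂ)
    {V : Type*} [AddCommGroup V] [Module ℂ V] (Hv : ℤ → V →ₗ[ℂ] V) (i : ℤ) :
    PP m ⊗[ℂ] V →ₗ[ℂ] PP m ⊗[ℂ] V :=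
  TensorProduct.map (∑ k : Fin m, facH m lam k i) LinearMap.id +
    TensorProduct.map LinearMap.id (Hv i)

/-- The diagonal action of `d_i`. -/
noncomputable def tenD (m : ℕ) (lam gam : Fin m → ℂ)
    {V : Type*} [AddCommGroup V] [Module ℂ V] (Dv : ℤ → V →ₗ[ℂ] V) (i : ℤ) :
    PP m ⊗[ℂ] V →ₗ[ℂ] PP m ⊗[ℂ] V :=
  TensorProduct.map (∑ k : Fin m, facD m lam gam k i) LinearMap.id +
    TensorProduct.map LinearMap.id (Dv i)

/-- The diagonal action of the central element `C` (it acts by `0` on each polynomial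
factor). -/
noncomputable def tenC (m : ℕ) {V : Type*} [AddCommGroup V] [Module ℂ V]
    (Cv : V →ₗ[ℂ] V) : PP m ⊗[ℂ] V →ₗ[ℂ] PP m ⊗[ℂ] V :=
  TensorProduct.map LinearMap.id Cv

/-- A family of operators on `V` defines an action of the affine-Virasoro algebra of type
`A₁` (all defining bracket relations hold as commutators). -/
def IsAVAction {V : Type*} [AddCommGroup V] [Module ℂ V]
    (Ev Fv Hv Dv : ℤ → V →ₗ[ℂ] V) (Cv : V →ₗ[ℂ] V) : Prop :=
  (∀ i j : ℤ, Ev i ∘ₗ Fv j - Fv j ∘ₗ Ev i =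
    Hv (i + j) + (if i + j = 0 then (i : ℂ) else 0) • Cv) ∧
  (∀ i j : ℤ, Hv i ∘ₗ Ev j - Ev j ∘ₗ Hv i = (2 : ℂ) • Ev (i + j)) ∧
  (∀ i j : ℤ, Hv i ∘ₗ Fv j - Fv j ∘ₗ Hv i = (-2 : ℂ) • Fv (i + j)) ∧
  (∀ i j : ℤ, Dv i ∘ₗ Dv j - Dv j ∘ₗ Dv i = ((j : ℂ) - (i : ℂ)) • Dv (i + j) +
    (if i + j = 0 then ((i : ℂ) ^ 3 - (i : ℂ)) / 12 else 0) • Cv) ∧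
  (∀ i j : ℤ, Dv i ∘ₗ Hv j - Hv j ∘ₗ Dv i = (j : ℂ) • Hv (i + j)) ∧
  (∀ i j : ℤ, Hv i ∘ₗ Hv j - Hv j ∘ₗ Hv i = (if i + j = 0 then (-2 * (i : ℂ)) else 0) • Cv) ∧
  (∀ i j : ℤ, Dv i ∘ₗ Ev j - Ev j ∘ₗ Dv i = (j : ℂ) • Ev (i + j)) ∧
  (∀ i j : ℤ, Dv i ∘ₗ Fv j - Fv j ∘ₗ Dv i = (j : ℂ) • Fv (i + j)) ∧
  (∀ i j : ℤ, Ev i ∘ₗ Ev j = Ev j ∘ₗ Ev i) ∧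
  (∀ i j : ℤ, Fv i ∘ₗ Fv j = Fv j ∘ₗ Fv i) ∧
  (∀ i : ℤ, Ev i ∘ₗ Cv = Cv ∘ₗ Ev i ∧ Fv i ∘ₗ Cv = Cv ∘ₗ Fv i ∧
    Hv i ∘ₗ Cv = Cv ∘ₗ Hv i ∧ Dv i ∘ₗ Cv = Cv ∘ₗ Dv i)

/-- A subspace of `V` stable under all operators. -/
def VStable {V : Type*} [AddCommGroup V] [Module ℂ V]
    (Ev Fv Hv Dv : ℤ → V →ₗ[ℂ] V) (Cv : V →ₗ[ℂ] V) (U : Submodule ℂ V) : Prop :=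
  ∀ i : ℤ, ∀ v ∈ U, Ev i v ∈ U ∧ Fv i v ∈ U ∧ Hv i v ∈ U ∧ Dv i v ∈ U ∧ Cv v ∈ U

/-- `V`, with the given operators, is an irreducible highest weight module of highest weight
`(η, ε, θ)` over the affine-Virasoro algebra of type `A₁`. -/
def IsIrrHW (V : Type*) [AddCommGroup V] [Module ℂ V] (eta eps th : ℂ)
    (Ev Fv Hv Dv : ℤ → V →ₗ[ℂ] V) (Cv : V →ₗ[ℂ] V) : Prop :=
  IsAVAction Ev Fv Hv Dv Cv ∧ Cv = th • LinearMap.id ∧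
  (∃ v0 : V, v0 ≠ 0 ∧
    (∀ i : ℤ, 1 ≤ i → Ev i v0 = 0 ∧ Fv i v0 = 0 ∧ Hv i v0 = 0 ∧ Dv i v0 = 0) ∧
    Ev 0 v0 = 0 ∧ Dv 0 v0 = eta • v0 ∧ Hv 0 v0 = eps • v0 ∧ Cv v0 = th • v0 ∧
    (∀ U : Submodule ℂ V, VStable Ev Fv Hv Dv Cv U → v0 ∈ U → U = ⊤)) ∧
  (∀ U : Submodule ℂ V, VStable Ev Fv Hv Dv Cv U → U = ⊥ ∨ U = ⊤)

open Filter

section ExponentialPolynomial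

open Polynomial LinearMap

variable (K : Type*) [Field K]

noncomputable def seqShift : Module.End K (ℕ → K) := funLeft K K Nat.succ

variable {K}

lemma seqShift_sub_smul_pow_apply (g : K → K) (μ : K) (j : ℕ) :
    ((seqShift K - μ • 1) ^ j) (fun n : ℕ => g n * μ ^ n) =
      fun n : ℕ => ((fwdDiff 1)^[j] g) n * μ ^ (n + j) := by
  induction j with
  | zero => simp
  | succ j ih =>
    rw [pow_succ', Module.End.mul_apply, ih]
    funext n
    simp only [seqShift, LinearMap.sub_apply, LinearMap.smul_apply, Module.End.one_apply,
      Pi.sub_apply, Pi.smul_apply, funLeft_apply, smul_eq_mul, Function.iterate_succ_apply',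
      fwdDiff, Nat.succ_eq_add_one, Nat.cast_succ]
    ring

lemma eval_mul_pow_mem_maxGenEigenspace (p : K[X]) (μ : K) :
    (fun n : ℕ => p.eval (n : K) * μ ^ n) ∈ (seqShift K).maxGenEigenspace μ := by
  rw [Module.End.mem_maxGenEigenspace]
  refine ⟨p.natDegree + 1, (seqShift_sub_smul_pow_apply p.eval μ _).trans ?_⟩
  rw [p.fwdDiff_iter_degree_add_one_eq_zero]
  exact funext fun n => by simp

variable [CharZero K] {ι : Type*} [Fintype ι] {μ : ι → K}

theorem Polynomial.eq_zero_of_eventually_sum_eval_mul_pow_eq_zero (hμ : Function.Injective μ)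
    {p : ι → K[X]} (h : ∀ᶠ n : ℕ in atTop, ∑ k, (p k).eval (n : K) * μ k ^ n = 0) {k : ι}
    (hk : μ k ≠ 0) : p k = 0 := by
  classical
  obtain ⟨N, hN⟩ := eventually_atTop.mp h
  set T : Module.End K (ℕ → K) := funLeft K K (· + N)
  have hST : Commute (seqShift K) T := by
    refine LinearMap.ext fun f => ?_
    funext n
    simp [seqShift, T, funLeft_apply, Module.End.mul_apply, Nat.add_right_comm]
  have hmem : ∀ l, T (fun n : ℕ => (p l).eval (n : K) * μ l ^ n) ∈
      (seqShift K).maxGenEigenspace (μ l) :=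
    fun l => Module.End.mapsTo_maxGenEigenspace_of_comm hST _
      (eval_mul_pow_mem_maxGenEigenspace _ _)
  have hsum : ∑ l, T (fun n : ℕ => (p l).eval (n : K) * μ l ^ n) = 0 := by
    funext n
    simpa [T, funLeft_apply] using hN (n + N) (Nat.le_add_left N n)
  have hk0 := (iSupIndep_iff_finsetSum_eq_zero_imp_eq_zero _).mp
    ((Module.End.independent_maxGenEigenspace _).comp hμ) Finset.univ _ (fun l _ => hmem l) hsum
    k (Finset.mem_univ k)
  refine eq_zero_of_infinite_isRoot _ (Set.infinite_of_injective_forall_mem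
    (f := fun n : ℕ => ((n + N : ℕ) : K)) (fun a b hab => by simpa using hab) fun n => ?_)
  have := congrFun hk0 n
  simp only [T, funLeft_apply, Pi.zero_apply, mul_eq_zero, pow_eq_zero_iff', hk, false_and,
    or_false] at this
  exact this

theorem Polynomial.eq_zero_of_eventually_sum_eval_mul_zpow_eq_zero (hμ : Function.Injective μ)
    {p : ι → K[X]} (h : ∀ᶠ i : ℤ in atTop, ∑ k, (p k).eval (i : K) * μ k ^ i = 0) {k : ι}
    (hk : μ k ≠ 0) : p k = 0 :=
  eq_zero_of_eventually_sum_eval_mul_pow_eq_zero hμ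
    ((tendsto_natCast_atTop_atTop.eventually h).mono fun n hn => by simpa using hn) hk

variable {E A : Type*} [AddCommGroup E] [Module K E] [Semiring A] [Algebra K A]

theorem Submodule.coeff_mem_of_eventually_sum_zpow_smul_mem (U : Submodule K E)
    (hμ : Function.Injective μ) (g : A →ₗ[K] E) {Q : ι → A[X]}
    (h : ∀ᶠ i : ℤ in atTop, ∑ k, μ k ^ i • g ((Q k).eval (algebraMap K A i)) ∈ U) {k : ι}
    (hk : μ k ≠ 0) (j : ℕ) : g ((Q k).coeff j) ∈ U := by
  rw [← Submodule.Quotient.mk_eq_zero, ← Module.forall_dual_apply_eq_zero_iff K]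
  -- testing against functionals on `E ⧸ U` reduces the claim to scalar polynomials
  intro φ
  set ψ := φ ∘ₗ U.mkQ ∘ₗ g
  set P : ι → K[X] := fun l => ∑ j ∈ Finset.range ((Q l).natDegree + 1),
    monomial j (ψ ((Q l).coeff j))
  have hcoeff : ∀ l j, (P l).coeff j = ψ ((Q l).coeff j) := by
    intro l j
    simp only [P, finsetSum_coeff, Polynomial.coeff_monomial, Finset.sum_ite_eq',
      Finset.mem_range]
    split_ifs with hj
    · rfl
    · rw [coeff_eq_zero_of_natDegree_lt (by omega), map_zero]
  have heval : ∀ l (x : K), (P l).eval x = ψ ((Q l).eval (algebraMap K A x)) := by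
    intro l x
    simp only [P, eval_eq_sum_range (p := Q l), eval_finsetSum, Polynomial.eval_monomial,
      map_sum, ← map_pow, ← Algebra.commutes, ← Algebra.smul_def, map_smul, smul_eq_mul,
      mul_comm]
  have hP : P k = 0 := by
    refine eq_zero_of_eventually_sum_eval_mul_zpow_eq_zero hμ (h.mono fun i hi => ?_) hk
    have := congrArg φ ((Submodule.Quotient.mk_eq_zero U).mpr hi)
    simpa [heval, ψ, mul_comm, ← Submodule.mkQ_apply] using this
  simpa [hP, ψ] using (hcoeff k j).symm

end ExponentialPolynomial

section EventualKernel

variable {R M : Type*} [Ring R] [AddCommGroup M] [Module R M]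

def eventualKernel (T : ℤ → M →ₗ[R] M) : Submodule R M where
  carrier := {w | ∀ᶠ i in atTop, T i w = 0}
  add_mem' ha hb := (ha.and hb).mono fun i h => by simp [h.1, h.2]
  zero_mem' := by simp
  smul_mem' c w hw := hw.mono fun i h => by simp [h]

variable {T A R' : ℤ → M →ₗ[R] M} {B : M →ₗ[R] M} {w : M}

lemma eventually_apply_add_eq_zero (hw : w ∈ eventualKernel T) (j : ℤ) :
    ∀ᶠ i in atTop, T (i + j) w = 0 :=
  (tendsto_atTop_add_const_right _ j tendsto_id).eventually hw

lemma apply_mem_eventualKernel (hw : w ∈ eventualKernel A)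
    (hAB : ∀ i, A i ∘ₗ B - B ∘ₗ A i = R' i) (hR : ∀ᶠ i in atTop, R' i w = 0) :
    B w ∈ eventualKernel A :=
  (hw.and hR).mono fun i h => by
    simpa [h.1, sub_eq_zero] using congrArg (· w) (hAB i) |>.trans h.2

lemma apply_mem_eventualKernel' (hw : w ∈ eventualKernel A)
    (hBA : ∀ i, B ∘ₗ A i - A i ∘ₗ B = R' i) (hR : ∀ᶠ i in atTop, R' i w = 0) :
    B w ∈ eventualKernel A :=
  apply_mem_eventualKernel hw (R' := fun i => -R' i) (fun i => by rw [← hBA i, neg_sub])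
    (hR.mono fun i h => by simp [h])

end EventualKernel

section HighestWeight

variable {V : Type*} [AddCommGroup V] [Module ℂ V] {Ev Fv Hv Dv : ℤ → V →ₗ[ℂ] V}
  {Cv : V →ₗ[ℂ] V}

variable (Ev Fv Hv Dv) in
def eventualAnnihilator : Submodule ℂ V :=
  eventualKernel Ev ⊓ eventualKernel Fv ⊓ eventualKernel Hv ⊓ eventualKernel Dv

theorem IsAVAction.vStable_eventualAnnihilator (hV : IsAVAction Ev Fv Hv Dv Cv) :
    VStable Ev Fv Hv Dv Cv (eventualAnnihilator Ev Fv Hv Dv) := by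
  obtain ⟨rEF, rHE, rHF, rDD, rDH, rHH, rDE, rDF, rEE, rFF, rC⟩ := hV
  rintro j w ⟨⟨⟨hE, hF⟩, hH⟩, hD⟩
  -- every commutator `[A_i, B_j]` is a combination of modes `i + j` and of `C` when `i + j = 0`
  have hR : ∀ᶠ i in atTop, i + j ≠ 0 ∧ Ev (i + j) w = 0 ∧ Fv (i + j) w = 0 ∧
      Hv (i + j) w = 0 ∧ Dv (i + j) w = 0 :=
    ((eventually_gt_atTop (-j)).and <| (eventually_apply_add_eq_zero hE j).and <|
      (eventually_apply_add_eq_zero hF j).and <| (eventually_apply_add_eq_zero hH j).and <|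
      eventually_apply_add_eq_zero hD j).mono fun i h => ⟨by omega, h.2⟩
  have hR' : ∀ᶠ i in atTop, j + i ≠ 0 ∧ Ev (j + i) w = 0 ∧ Fv (j + i) w = 0 ∧
      Hv (j + i) w = 0 ∧ Dv (j + i) w = 0 :=
    hR.mono fun i h => by simpa only [add_comm j i] using h
  refine ⟨⟨⟨⟨?_, ?_⟩, ?_⟩, ?_⟩, ⟨⟨⟨?_, ?_⟩, ?_⟩, ?_⟩, ⟨⟨⟨?_, ?_⟩, ?_⟩, ?_⟩,
    ⟨⟨⟨?_, ?_⟩, ?_⟩, ?_⟩, ⟨⟨⟨?_, ?_⟩, ?_⟩, ?_⟩⟩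
  · exact apply_mem_eventualKernel hE (fun i => sub_eq_zero.mpr (rEE i j)) (by simp)
  · exact apply_mem_eventualKernel' hF (fun i => rEF j i) (hR'.mono fun i h => by simp [h])
  · exact apply_mem_eventualKernel hH (fun i => rHE i j) (hR.mono fun i h => by simp [h])
  · exact apply_mem_eventualKernel hD (fun i => rDE i j) (hR.mono fun i h => by simp [h])
  · exact apply_mem_eventualKernel hE (fun i => rEF i j) (hR.mono fun i h => by simp [h])
  · exact apply_mem_eventualKernel hF (fun i => sub_eq_zero.mpr (rFF i j)) (by simp)
  · exact apply_mem_eventualKernel hH (fun i => rHF i j) (hR.mono fun i h => by simp [h])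
  · exact apply_mem_eventualKernel hD (fun i => rDF i j) (hR.mono fun i h => by simp [h])
  · exact apply_mem_eventualKernel' hE (fun i => rHE j i) (hR'.mono fun i h => by simp [h])
  · exact apply_mem_eventualKernel' hF (fun i => rHF j i) (hR'.mono fun i h => by simp [h])
  · exact apply_mem_eventualKernel hH (fun i => rHH i j) (hR.mono fun i h => by simp [h])
  · exact apply_mem_eventualKernel hD (fun i => rDH i j) (hR.mono fun i h => by simp [h])
  · exact apply_mem_eventualKernel' hE (fun i => rDE j i) (hR'.mono fun i h => by simp [h])
  · exact apply_mem_eventualKernel' hF (fun i => rDF j i) (hR'.mono fun i h => by simp [h])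
  · exact apply_mem_eventualKernel' hH (fun i => rDH j i) (hR'.mono fun i h => by simp [h])
  · exact apply_mem_eventualKernel hD (fun i => rDD i j) (hR.mono fun i h => by simp [h])
  · exact apply_mem_eventualKernel hE (fun i => sub_eq_zero.mpr (rC i).1) (by simp)
  · exact apply_mem_eventualKernel hF (fun i => sub_eq_zero.mpr (rC i).2.1) (by simp)
  · exact apply_mem_eventualKernel hH (fun i => sub_eq_zero.mpr (rC i).2.2.1) (by simp)
  · exact apply_mem_eventualKernel hD (fun i => sub_eq_zero.mpr (rC i).2.2.2) (by simp)

theorem IsIrrHW.eventualAnnihilator_eq_top {eta eps th : ℂ}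
    (hV : IsIrrHW V eta eps th Ev Fv Hv Dv Cv) : eventualAnnihilator Ev Fv Hv Dv = ⊤ := by
  obtain ⟨hact, -, ⟨v0, -, hpos, -, -, -, -, hgen⟩, -⟩ := hV
  have hv0 : ∀ᶠ i in atTop, Ev i v0 = 0 ∧ Fv i v0 = 0 ∧ Hv i v0 = 0 ∧ Dv i v0 = 0 :=
    (eventually_ge_atTop 1).mono hpos
  exact hgen _ hact.vStable_eventualAnnihilator ⟨⟨⟨hv0.mono fun _ h => h.1,
    hv0.mono fun _ h => h.2.1⟩, hv0.mono fun _ h => h.2.2.1⟩, hv0.mono fun _ h => h.2.2.2⟩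

end HighestWeight

section TmulSlice

variable {R M N : Type*} [CommRing R] [AddCommGroup M] [Module R M] [AddCommGroup N]
  [Module R N]

def Submodule.tmulSlice (W : Submodule R (M ⊗[R] N)) : Submodule R N :=
  ⨅ x : M, W.comap (TensorProduct.mk R M N x)

variable {W : Submodule R (M ⊗[R] N)} {y : N}

lemma Submodule.mem_tmulSlice : y ∈ W.tmulSlice ↔ ∀ x : M, x ⊗ₜ[R] y ∈ W := by
  simp [Submodule.tmulSlice]

lemma Submodule.apply_mem_tmulSlice {A : M →ₗ[R] M} {B : N →ₗ[R] N}
    (hW : ∀ z ∈ W, (TensorProduct.map A LinearMap.id + TensorProduct.map LinearMap.id B :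
      M ⊗[R] N →ₗ[R] M ⊗[R] N) z ∈ W)
    (hy : y ∈ W.tmulSlice) :
    B y ∈ W.tmulSlice := by
  rw [Submodule.mem_tmulSlice] at hy ⊢
  intro x
  have h := W.sub_mem (hW _ (hy x)) (hy (A x))
  simpa using h

lemma Submodule.eq_top_of_tmulSlice_eq_top (h : W.tmulSlice = ⊤) : W = ⊤ := by
  rw [eq_top_iff, ← TensorProduct.span_tmul_eq_top, Submodule.span_le]
  rintro _ ⟨x, y, rfl⟩
  exact Submodule.mem_tmulSlice.mp (h ▸ Submodule.mem_top) x

end TmulSlice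

section ShiftPoly

noncomputable def shiftPoly (m : ℕ) (k : Fin m) : PP m →ₐ[ℂ] Polynomial (PP m) :=
  aeval fun w => if w = (k, 0) then Polynomial.C (X w) - Polynomial.X else Polynomial.C (X w)

lemma subm_zero_apply (m : ℕ) (k : Fin m) (i : ℤ) (p : PP m) :
    subm m k i 0 p = (shiftPoly m k p).eval (algebraMap ℂ (PP m) i) := by
  have h : subm m k i 0 =
      ((Polynomial.aeval (algebraMap ℂ (PP m) i)).restrictScalars ℂ).comp (shiftPoly m k) := by
    refine MvPolynomial.algHom_ext fun w => ?_
    simp only [subm, shiftPoly, aeval_X, AlgHom.coe_comp, AlgHom.coe_restrictScalars',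
      Function.comp_apply]
    split_ifs <;> simp
  rw [h]
  rfl

lemma shiftPoly_coeff_zero (m : ℕ) (k : Fin m) (p : PP m) : (shiftPoly m k p).coeff 0 = p := by
  have h : ((Polynomial.aeval (0 : PP m)).restrictScalars ℂ).comp (shiftPoly m k) =
      AlgHom.id ℂ (PP m) := by
    refine MvPolynomial.algHom_ext fun w => ?_
    simp only [shiftPoly, aeval_X, AlgHom.coe_comp, AlgHom.coe_restrictScalars',
      Function.comp_apply]
    split_ifs <;> simp
  rw [Polynomial.coeff_zero_eq_eval_zero, ← Polynomial.coe_aeval_eq_eval]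
  exact congrArg (· p) h

lemma facH_apply (m : ℕ) (lam : Fin m → ℂ) (k : Fin m) (i : ℤ) (p : PP m) :
    facH m lam k i p =
      lam k ^ i • (Polynomial.C (X (k, 1)) * shiftPoly m k p).eval (algebraMap ℂ (PP m) i) := by
  simp [facH, subm_zero_apply]

lemma facD_apply (m : ℕ) (lam gam : Fin m → ℂ) (k : Fin m) (i : ℤ) (p : PP m) :
    facD m lam gam k i p = lam k ^ i •
      ((Polynomial.C (X (k, 0)) + Polynomial.C (C (gam k)) * Polynomial.X) * shiftPoly m k p).eval
        (algebraMap ℂ (PP m) i) := by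
  simp [facD, subm_zero_apply, mul_comm (C (gam k))]

end ShiftPoly

section Generation

variable {m : ℕ} {lam gam : Fin m → ℂ} {V : Type*} [AddCommGroup V] [Module ℂ V]
  {Hv Dv : ℤ → V →ₗ[ℂ] V} {W : Submodule ℂ (PP m ⊗[ℂ] V)} {v : V}

theorem X_mul_tmul_mem (hlam0 : ∀ k, lam k ≠ 0) (hinj : Function.Injective lam)
    (hWH : ∀ i, ∀ x ∈ W, tenH m lam Hv i x ∈ W) (hWD : ∀ i, ∀ x ∈ W, tenD m lam gam Dv i x ∈ W)
    (hvH : v ∈ eventualKernel Hv) (hvD : v ∈ eventualKernel Dv) {p : PP m}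
    (hp : p ⊗ₜ[ℂ] v ∈ W) (w : Fin m × Fin 2) : (X w * p) ⊗ₜ[ℂ] v ∈ W := by
  obtain ⟨k, b⟩ := w
  set g := (TensorProduct.mk ℂ (PP m) V).flip v
  fin_cases b
  · have := W.coeff_mem_of_eventually_sum_zpow_smul_mem hinj g
      (Q := fun l => (Polynomial.C (X (l, 0)) + Polynomial.C (C (gam l)) * Polynomial.X) *
        shiftPoly m l p)
      (hvD.mono fun i hi => by
        simpa [g, tenD, hi, facD_apply, TensorProduct.sum_tmul, smul_tmul'] using hWD i _ hp)
      (hlam0 k) 0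
    simpa [g, shiftPoly_coeff_zero] using this
  · have := W.coeff_mem_of_eventually_sum_zpow_smul_mem hinj g
      (Q := fun l => Polynomial.C (X (l, 1)) * shiftPoly m l p)
      (hvH.mono fun i hi => by
        simpa [g, tenH, hi, facH_apply, TensorProduct.sum_tmul, smul_tmul'] using hWH i _ hp)
      (hlam0 k) 0
    simpa [g, shiftPoly_coeff_zero] using this

theorem tmul_mem_of_one_tmul_mem (hlam0 : ∀ k, lam k ≠ 0) (hinj : Function.Injective lam)
    (hWH : ∀ i, ∀ x ∈ W, tenH m lam Hv i x ∈ W) (hWD : ∀ i, ∀ x ∈ W, tenD m lam gam Dv i x ∈ W)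
    (hvH : v ∈ eventualKernel Hv) (hvD : v ∈ eventualKernel Dv)
    (hone : (1 : PP m) ⊗ₜ[ℂ] v ∈ W) (p : PP m) : p ⊗ₜ[ℂ] v ∈ W := by
  induction p using MvPolynomial.induction_on with
  | C a =>
    rw [← mul_one (C a), ← smul_eq_C_mul, ← smul_tmul']
    exact W.smul_mem a hone
  | add p q hp hq =>
    rw [add_tmul]
    exact W.add_mem hp hq
  | mul_X p w hp =>
    rw [mul_comm]
    exact X_mul_tmul_mem hlam0 hinj hWH hWD hvH hvD hp w

theorem vStable_tmulSlice {Mt : Fin 3} {alp bet : Fin m → ℂ} {Ev Fv : ℤ → V →ₗ[ℂ] V}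
    {Cv : V →ₗ[ℂ] V}
    (hstab : ∀ i : ℤ, ∀ x ∈ W, tenE m Mt lam alp bet Ev i x ∈ W ∧
      tenF m Mt lam alp bet Fv i x ∈ W ∧ tenH m lam Hv i x ∈ W ∧
      tenD m lam gam Dv i x ∈ W ∧ tenC m Cv x ∈ W) :
    VStable Ev Fv Hv Dv Cv W.tmulSlice := fun i _ hw =>
  ⟨Submodule.apply_mem_tmulSlice (fun x hx => (hstab i x hx).1) hw,
    Submodule.apply_mem_tmulSlice (fun x hx => (hstab i x hx).2.1) hw,
    Submodule.apply_mem_tmulSlice (fun x hx => (hstab i x hx).2.2.1) hw,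
    Submodule.apply_mem_tmulSlice (fun x hx => (hstab i x hx).2.2.2.1) hw,
    Submodule.apply_mem_tmulSlice (A := 0)
      (fun x hx => by simpa [tenC] using (hstab i x hx).2.2.2.2) hw⟩

end Generation

theorem stmt15_general (m : ℕ) (Mt : Fin 3) (lam alp bet gam : Fin m → ℂ)
    (hlam0 : ∀ k, lam k ≠ 0) (hinj : Function.Injective lam)
    (V : Type*) [AddCommGroup V] [Module ℂ V]
    (Ev Fv Hv Dv : ℤ → V →ₗ[ℂ] V) (Cv : V →ₗ[ℂ] V) (eta eps th : ℂ)
    (hV : IsIrrHW V eta eps th Ev Fv Hv Dv Cv)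
    (v : V) (hv : v ≠ 0) (W : Submodule ℂ (PP m ⊗[ℂ] V))
    (hstab : ∀ i : ℤ, ∀ x ∈ W, tenE m Mt lam alp bet Ev i x ∈ W ∧
      tenF m Mt lam alp bet Fv i x ∈ W ∧ tenH m lam Hv i x ∈ W ∧
      tenD m lam gam Dv i x ∈ W ∧ tenC m Cv x ∈ W)
    (hmem : (1 : PP m) ⊗ₜ[ℂ] v ∈ W) :
    W = ⊤ := by
  obtain ⟨⟨-, hvH⟩, hvD⟩ : v ∈ eventualAnnihilator Ev Fv Hv Dv :=
    hV.eventualAnnihilator_eq_top ▸ Submodule.mem_top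
  have hv_slice : v ∈ W.tmulSlice := Submodule.mem_tmulSlice.mpr <|
    tmul_mem_of_one_tmul_mem hlam0 hinj (fun i x hx => (hstab i x hx).2.2.1)
      (fun i x hx => (hstab i x hx).2.2.2.1) hvH hvD hmem
  refine Submodule.eq_top_of_tmulSlice_eq_top <|
    (hV.2.2.2 _ (vStable_tmulSlice hstab)).resolve_left fun h => hv ?_
  rwa [h, Submodule.mem_bot] at hv_slice

/-- For pairwise distinct nonzero `λ_k` and any irreducible highest weight module
`V(η,ε,θ)`, the element `1 ⊗ ⋯ ⊗ 1 ⊗ v` generates the tensor product module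
`𝐓^M = (⊗_{k=1}^m M(λ_k,α_k,β_k,γ_k)) ⊗ V(η,ε,θ)` for any nonzero `v`. -/
theorem stmt15 (m : ℕ) (hm : 0 < m) (Mt : Fin 3) (lam alp bet gam : Fin m → ℂ)
    (hlam0 : ∀ k, lam k ≠ 0) (hinj : Function.Injective lam) (halp : ∀ k, alp k ≠ 0)
    (hbet : Mt = 2 → ∀ k, ¬ ∃ n : ℕ, 2 * bet k = (n : ℂ))
    (V : Type*) [AddCommGroup V] [Module ℂ V]
    (Ev Fv Hv Dv : ℤ → V →ₗ[ℂ] V) (Cv : V →ₗ[ℂ] V) (eta eps th : ℂ)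
    (hV : IsIrrHW V eta eps th Ev Fv Hv Dv Cv)
    (v : V) (hv : v ≠ 0) (W : Submodule ℂ (PP m ⊗[ℂ] V))
    (hstab : ∀ i : ℤ, ∀ x ∈ W, tenE m Mt lam alp bet Ev i x ∈ W ∧
      tenF m Mt lam alp bet Fv i x ∈ W ∧ tenH m lam Hv i x ∈ W ∧
      tenD m lam gam Dv i x ∈ W ∧ tenC m Cv x ∈ W)
    (hmem : (1 : PP m) ⊗ₜ[ℂ] v ∈ W) :
    W = ⊤ :=
  stmt15_general m Mt lam alp bet gam hlam0 hinj V Ev Fv Hv Dv Cv eta eps th hV v hv W hstab hmem
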